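/- Let p1, p2 ∈ ℝ^M be strictly positive probability vectors with p1 ≠ p2, let ε1, ε2 > 0, let λ* = ‖p1 − p2‖² and v* = (p1 − p2)/‖p1 − p2‖. Suppose η1 > 0 and η2 > 0 satisfy Σ_{i=1}^M p1_i·(v*_i)²/(η1·p1_i + η2·p2_i)² = 8ε1/(λ*)² and Σ_{i=1}^M p2_i·(v*_i)²/(η1·p1_i + η2·p2_i)² = 8ε2/(λ*)². Then the vector α* ∈ ℝ^M with entries α*_i = (λ*/2)·v*_i/(η1·p1_i + η2·p2_i), as well as −α*, is an optimal solution of the quadratic vector problem, and α* satisfies both constraints with equality: (1/2)Σ_i p1_i (α*_i)² = ε1 and (1/2)Σ_i p2_i (α*_i)² = ε2. -/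

import Mathlib

open Real

noncomputable section

/-- Objective of the quadratic vector problem:
`Q(α) = (1/2)·(Σ_i (p1_i − p2_i) α_i)²`. -/
def Qobj {M : ℕ} (p1 p2 : Fin M → ℝ) (α : Fin M → ℝ) : ℝ :=
  (1 / 2) * (∑ i, (p1 i - p2 i) * α i) ^ 2

/-- Feasible set of the quadratic vector problem:
`(1/2)·Σ_i p1_i α_i² ≤ ε1` and `(1/2)·Σ_i p2_i α_i² ≤ ε2`. -/
def QFeas {M : ℕ} (p1 p2 : Fin M → ℝ) (ε1 ε2 : ℝ) : Set (Fin M → ℝ) :=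
  {α | (1 / 2) * ∑ i, p1 i * (α i) ^ 2 ≤ ε1 ∧ (1 / 2) * ∑ i, p2 i * (α i) ^ 2 ≤ ε2}

/-- Objective of the matrix problem:
`F(A) = (1/2)·‖Σ_i (p1_i − p2_i) A_i‖²` (squared Euclidean norm of the
indicated combination of the rows of `A`). -/
def Fobj {M : ℕ} (p1 p2 : Fin M → ℝ) (A : Matrix (Fin M) (Fin M) ℝ) : ℝ :=
  (1 / 2) * ∑ j, (∑ i, (p1 i - p2 i) * A i j) ^ 2

/-- Feasible set of the matrix problem:
`(1/2)·Σ_i p1_i ‖A_i‖² ≤ ε1`, `(1/2)·Σ_i p2_i ‖A_i‖² ≤ ε2`, and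
`Σ_j A_{ij} √(w0_j) = 0` for every `i`. -/
def MFeas {M : ℕ} (p1 p2 : Fin M → ℝ) (ε1 ε2 : ℝ) (w0 : Fin M → ℝ) :
    Set (Matrix (Fin M) (Fin M) ℝ) :=
  {A | (1 / 2) * ∑ i, p1 i * ∑ j, (A i j) ^ 2 ≤ ε1 ∧
       (1 / 2) * ∑ i, p2 i * ∑ j, (A i j) ^ 2 ≤ ε2 ∧
       ∀ i, ∑ j, A i j * Real.sqrt (w0 j) = 0}

/-! The problem is a Cauchy–Schwarz problem in the weighted norm `Σ_i w_i α_i²`, where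
`w = η1 p1 + η2 p2`: every feasible `β` has `Σ w β² ≤ 2(η1 ε1 + η2 ε2)`, hence
`(Σ (p1 - p2) β)² ≤ (Σ (p1 - p2)²/w) · 2(η1 ε1 + η2 ε2)`. The vector `α*` is proportional
to `(p1 - p2)/w`, so it attains equality in Cauchy–Schwarz, and the two equations on
`η1, η2` say exactly that both constraints are active at `α*`, so that
`Σ w α*² = 2(η1 ε1 + η2 ε2)` as well. -/

open Finset

section FiniteSums

variable {ι : Type*} [Fintype ι]

theorem sq_sum_mul_le_sum_sq_div_mul_sum_mul_sq {d w β : ι → ℝ} (hw : ∀ i, 0 < w i) :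
    (∑ i, d i * β i) ^ 2 ≤ (∑ i, d i ^ 2 / w i) * ∑ i, w i * β i ^ 2 :=
  sum_sq_le_sum_mul_sum_of_sq_le_mul _
    (fun i _ => div_nonneg (sq_nonneg _) (hw i).le)
    (fun i _ => mul_nonneg (hw i).le (sq_nonneg _))
    (fun i _ => by field_simp [(hw i).ne']; rfl)

theorem sq_sum_mul_le_of_sum_mul_sq_le {d w α β : ι → ℝ} {c : ℝ} (hw : ∀ i, 0 < w i)
    (hα : ∀ i, α i = c * d i / w i) (hβ : ∑ i, w i * β i ^ 2 ≤ ∑ i, w i * α i ^ 2) :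
    (∑ i, d i * β i) ^ 2 ≤ (∑ i, d i * α i) ^ 2 := by
  set S := ∑ i, d i ^ 2 / w i
  have hS : 0 ≤ S := sum_nonneg fun i _ => div_nonneg (sq_nonneg _) (hw i).le
  have hdα : ∑ i, d i * α i = c * S := by
    rw [mul_sum]
    refine sum_congr rfl fun i _ => ?_
    rw [hα]
    ring
  have hwα : ∑ i, w i * α i ^ 2 = c ^ 2 * S := by
    rw [mul_sum]
    refine sum_congr rfl fun i _ => ?_
    rw [hα]
    field_simp [(hw i).ne']
  calc (∑ i, d i * β i) ^ 2 ≤ S * ∑ i, w i * β i ^ 2 :=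
        sq_sum_mul_le_sum_sq_div_mul_sum_mul_sq hw
    _ ≤ S * ∑ i, w i * α i ^ 2 := mul_le_mul_of_nonneg_left hβ hS
    _ = (∑ i, d i * α i) ^ 2 := by rw [hwα, hdα]; ring

theorem sum_sub_sq_pos_of_ne {f g : ι → ℝ} (h : f ≠ g) : 0 < ∑ i, (f i - g i) ^ 2 := by
  obtain ⟨i, hi⟩ := Function.ne_iff.mp h
  exact sum_pos' (fun j _ => sq_nonneg _)
    ⟨i, mem_univ i, by have := sub_ne_zero.mpr hi; positivity⟩

theorem half_sum_mul_sq_eq {p α v w : ι → ℝ} {lam ε : ℝ} (hlam : lam ≠ 0)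
    (hα : ∀ i, α i = lam / 2 * v i / w i)
    (heq : ∑ i, p i * v i ^ 2 / w i ^ 2 = 8 * ε / lam ^ 2) :
    (1 / 2) * ∑ i, p i * α i ^ 2 = ε := by
  have hterm : ∀ i, p i * α i ^ 2 = lam ^ 2 / 4 * (p i * v i ^ 2 / w i ^ 2) := fun i => by
    rw [hα]
    ring
  simp only [hterm, ← mul_sum, heq]
  field_simp
  ring

end FiniteSums

section QuadraticVectorProblem

variable {M : ℕ} {p1 p2 α : Fin M → ℝ} {ε1 ε2 : ℝ}

theorem sum_combination_mul_sq (η1 η2 : ℝ) (β : Fin M → ℝ) :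
    ∑ i, (η1 * p1 i + η2 * p2 i) * β i ^ 2
      = η1 * ∑ i, p1 i * β i ^ 2 + η2 * ∑ i, p2 i * β i ^ 2 := by
  rw [mul_sum, mul_sum, ← sum_add_distrib]
  exact sum_congr rfl fun i _ => by ring

theorem optimal_of_active_of_proportional {η1 η2 c : ℝ} (hη1 : 0 ≤ η1) (hη2 : 0 ≤ η2)
    (hw : ∀ i, 0 < η1 * p1 i + η2 * p2 i)
    (hα : ∀ i, α i = c * (p1 i - p2 i) / (η1 * p1 i + η2 * p2 i))
    (h1 : (1 / 2) * ∑ i, p1 i * α i ^ 2 = ε1) (h2 : (1 / 2) * ∑ i, p2 i * α i ^ 2 = ε2) :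
    α ∈ QFeas p1 p2 ε1 ε2 ∧ ∀ β ∈ QFeas p1 p2 ε1 ε2, Qobj p1 p2 β ≤ Qobj p1 p2 α := by
  refine ⟨⟨h1.le, h2.le⟩, fun β ⟨hβ1, hβ2⟩ => ?_⟩
  have hβ : ∑ i, (η1 * p1 i + η2 * p2 i) * β i ^ 2
      ≤ ∑ i, (η1 * p1 i + η2 * p2 i) * α i ^ 2 := by
    rw [sum_combination_mul_sq, sum_combination_mul_sq]
    rw [← h1] at hβ1
    rw [← h2] at hβ2
    have := mul_le_mul_of_nonneg_left hβ1 hη1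
    have := mul_le_mul_of_nonneg_left hβ2 hη2
    linarith
  unfold Qobj
  gcongr 1 / 2 * ?_
  exact sq_sum_mul_le_of_sum_mul_sq_le hw hα hβ

theorem Qobj_neg (p1 p2 α : Fin M → ℝ) : Qobj p1 p2 (-α) = Qobj p1 p2 α := by
  simp [Qobj]

theorem neg_mem_QFeas (h : α ∈ QFeas p1 p2 ε1 ε2) : -α ∈ QFeas p1 p2 ε1 ε2 := by
  simpa [QFeas] using h

end QuadraticVectorProblem

theorem optimal_alpha_both_constraints_active_general {M : ℕ}
    (p1 p2 : Fin M → ℝ)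
    (hp1 : ∀ i, 0 < p1 i)
    (hp2 : ∀ i, 0 < p2 i)
    (hne : p1 ≠ p2)
    (ε1 ε2 : ℝ)
    (lam : ℝ) (hlam : lam = ∑ i, (p1 i - p2 i) ^ 2)
    (vs : Fin M → ℝ)
    (hvs : ∀ i, vs i = (p1 i - p2 i) / Real.sqrt (∑ k, (p1 k - p2 k) ^ 2))
    (η1 η2 : ℝ) (hη1 : 0 < η1) (hη2 : 0 < η2)
    (heq1 : ∑ i, p1 i * (vs i) ^ 2 / (η1 * p1 i + η2 * p2 i) ^ 2 = 8 * ε1 / lam ^ 2)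
    (heq2 : ∑ i, p2 i * (vs i) ^ 2 / (η1 * p1 i + η2 * p2 i) ^ 2 = 8 * ε2 / lam ^ 2)
    (αs : Fin M → ℝ)
    (hαs : ∀ i, αs i = (lam / 2) * vs i / (η1 * p1 i + η2 * p2 i)) :
    (αs ∈ QFeas p1 p2 ε1 ε2 ∧
      ∀ β ∈ QFeas p1 p2 ε1 ε2, Qobj p1 p2 β ≤ Qobj p1 p2 αs) ∧
    (-αs ∈ QFeas p1 p2 ε1 ε2 ∧
      ∀ β ∈ QFeas p1 p2 ε1 ε2, Qobj p1 p2 β ≤ Qobj p1 p2 (-αs)) ∧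
    (1 / 2) * ∑ i, p1 i * (αs i) ^ 2 = ε1 ∧
    (1 / 2) * ∑ i, p2 i * (αs i) ^ 2 = ε2 := by
  have hlam0 : lam ≠ 0 := hlam ▸ (sum_sub_sq_pos_of_ne hne).ne'
  have hw : ∀ i, 0 < η1 * p1 i + η2 * p2 i := fun i => by
    have := hp1 i
    have := hp2 i
    positivity
  have h1 := half_sum_mul_sq_eq hlam0 hαs heq1
  have h2 := half_sum_mul_sq_eq hlam0 hαs heq2
  have hopt := optimal_of_active_of_proportional hη1.le hη2.le hw
    (c := lam / 2 / √(∑ k, (p1 k - p2 k) ^ 2)) (fun i => by rw [hαs, hvs]; ring) h1 h2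
  refine ⟨hopt, ⟨neg_mem_QFeas hopt.1, fun β hβ => ?_⟩, h1, h2⟩
  rw [Qobj_neg]
  exact hopt.2 β hβ

/-- if `η1, η2 > 0` satisfy the two KKT equations
`Σ_i p1_i (v*_i)²/(η1 p1_i + η2 p2_i)² = 8ε1/(λ*)²` and
`Σ_i p2_i (v*_i)²/(η1 p1_i + η2 p2_i)² = 8ε2/(λ*)²`, then
`α*_i = (λ*/2)·v*_i/(η1 p1_i + η2 p2_i)`, as well as `−α*`, is an optimal solution
of the quadratic vector problem, and `α*` satisfies both constraints with equality. -/
theorem optimal_alpha_both_constraints_active {M : ℕ}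
    (p1 p2 : Fin M → ℝ)
    (hp1 : ∀ i, 0 < p1 i) (hp1s : ∑ i, p1 i = 1)
    (hp2 : ∀ i, 0 < p2 i) (hp2s : ∑ i, p2 i = 1)
    (hne : p1 ≠ p2)
    (ε1 ε2 : ℝ) (hε1 : 0 < ε1) (hε2 : 0 < ε2)
    (lam : ℝ) (hlam : lam = ∑ i, (p1 i - p2 i) ^ 2)
    (vs : Fin M → ℝ)
    (hvs : ∀ i, vs i = (p1 i - p2 i) / Real.sqrt (∑ k, (p1 k - p2 k) ^ 2))
    (η1 η2 : ℝ) (hη1 : 0 < η1) (hη2 : 0 < η2)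
    (heq1 : ∑ i, p1 i * (vs i) ^ 2 / (η1 * p1 i + η2 * p2 i) ^ 2 = 8 * ε1 / lam ^ 2)
    (heq2 : ∑ i, p2 i * (vs i) ^ 2 / (η1 * p1 i + η2 * p2 i) ^ 2 = 8 * ε2 / lam ^ 2)
    (αs : Fin M → ℝ)
    (hαs : ∀ i, αs i = (lam / 2) * vs i / (η1 * p1 i + η2 * p2 i)) :
    (αs ∈ QFeas p1 p2 ε1 ε2 ∧
      ∀ β ∈ QFeas p1 p2 ε1 ε2, Qobj p1 p2 β ≤ Qobj p1 p2 αs) ∧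
    (-αs ∈ QFeas p1 p2 ε1 ε2 ∧
      ∀ β ∈ QFeas p1 p2 ε1 ε2, Qobj p1 p2 β ≤ Qobj p1 p2 (-αs)) ∧
    (1 / 2) * ∑ i, p1 i * (αs i) ^ 2 = ε1 ∧
    (1 / 2) * ∑ i, p2 i * (αs i) ^ 2 = ε2 :=
  optimal_alpha_both_constraints_active_general p1 p2 hp1 hp2 hne ε1 ε2 lam hlam vs hvs η1 η2 hη1
    hη2 heq1 heq2 αs hαs
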